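/- Fix p ≥ 1 and block sizes n : Fin p → ℕ with n k ≥ 1, and set ι := Σ k, Fin (n k). Let u : ℝ → M_ι(ℂ) be differentiable at t₀ with u(t) unitary for all t ∈ ℝ, let λ : ℝ → (Fin p → ℝ) be differentiable at t₀, set h(t) := blockDiagonal'(fun k => (λ(t) k : ℂ) • 1_{n k}) and H(t) := u(t) · h(t) · u(t)†. Let ρ ∈ M_ι(ℂ) be a density matrix, let G := ∏_k U(n k) with Haar probability measure μ, and for V ∈ G set W(V) := u(t₀) · blockDiagonal' V · u(t₀)†. Then ∫_G trace( W(V) · ρ · W(V)† · H'(t₀) ) dμ(V) = trace( ρ · u(t₀) · h'(t₀) · u(t₀)† ), where H'(t₀) and h'(t₀) denote the derivatives at t₀. -/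

import Mathlib

open MeasureTheory Matrix ComplexOrder

attribute [local instance] Matrix.normedAddCommGroup Matrix.normedSpace

noncomputable instance (m : ℕ) : MeasurableSpace (Matrix.unitaryGroup (Fin m) ℂ) := borel _
instance (m : ℕ) : BorelSpace (Matrix.unitaryGroup (Fin m) ℂ) := ⟨rfl⟩

/-!
Write `v = u(t₀)`, `h₀ = h(t₀)` and `A = v†u'`. Since `u` stays unitary, `A` is skew-Hermitian, and
in the frame rotated by `v` the derivative of `H` becomes `v†H'v = h' + [A, h₀]`. Conjugating
`v†ρv` by `V` and averaging over the Haar measure gives a matrix `T` commuting with every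
block-diagonal unitary; commuting with the diagonal sign matrices forces `T` to be diagonal, so `T`
commutes with the diagonal `h₀` and `Tr(T [A, h₀]) = 0`. The block-scalar `h'` commutes with every
`V`, so its term survives the average unchanged as `Tr(v†ρv h') = Tr(ρ v h' v†)`.
-/

namespace Matrix

instance {m n R : Type*} [Countable m] [Countable n] [TopologicalSpace R]
    [SecondCountableTopology R] : SecondCountableTopology (Matrix m n R) :=
  inferInstanceAs (SecondCountableTopology (m → n → R))

instance {ι 𝕜 : Type*} [Fintype ι] [DecidableEq ι] [RCLike 𝕜] :
    SecondCountableTopology (unitaryGroup ι 𝕜) :=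
  TopologicalSpace.Subtype.secondCountableTopology _

instance {ι 𝕜 : Type*} [Fintype ι] [DecidableEq ι] [RCLike 𝕜] :
    CompactSpace (unitaryGroup ι 𝕜) :=
  isCompact_iff_compactSpace.mp <|
    Metric.isCompact_of_isClosed_isBounded (isClosed_unitary (R := Matrix ι ι 𝕜)) <|
      (Metric.isBounded_closedBall (x := (0 : Matrix ι ι 𝕜)) (r := 1)).subset fun _ hU =>
        mem_closedBall_zero_iff.mpr (entrywise_sup_norm_bound_of_unitary hU)

section Algebra

variable {ι α : Type*} [Fintype ι] [CommRing α]

theorem trace_mul_commutator_eq_zero_of_commute {T A h : Matrix ι ι α} (hTh : Commute T h) :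
    trace (T * (A * h - h * A)) = 0 := by
  rw [mul_sub, trace_sub, ← mul_assoc, trace_mul_comm (T * A), ← mul_assoc, ← hTh.eq,
    mul_assoc, sub_self]

theorem trace_conj_mul_star_conj_mul [StarRing α] (v X ρ H : Matrix ι ι α) :
    trace (v * X * star v * ρ * star (v * X * star v) * H)
      = trace (X * (star v * ρ * v) * star X * (star v * H * v)) := by
  simp only [star_mul, star_star, mul_assoc]
  rw [trace_mul_comm v]
  simp only [mul_assoc]

theorem isDiag_of_forall_commute_diagonal_sign [DecidableEq ι] [IsDomain α] [CharZero α]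
    {T : Matrix ι ι α}
    (hT : ∀ i₀, Commute (diagonal fun i => if i = i₀ then -1 else 1) T) : T.IsDiag := by
  intro i j hij
  have hij' := congrFun (congrFun (hT i).eq i) j
  simp only [diagonal_mul, mul_diagonal, ↓reduceIte, if_neg (Ne.symm hij), neg_one_mul,
    mul_one] at hij'
  exact neg_eq_self.mp hij'

theorem diagonal_mem_unitaryGroup [DecidableEq ι] [StarRing α] {d : ι → α}
    (hd : ∀ i, star (d i) * d i = 1) : diagonal d ∈ unitaryGroup ι α := by
  rw [mem_unitaryGroup_iff', star_eq_conjTranspose, diagonal_conjTranspose,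
    diagonal_mul_diagonal, ← diagonal_one]
  exact congrArg diagonal (funext hd)

end Algebra

section BlockDiagonal

variable {o : Type*} [DecidableEq o] {m : o → Type*} [∀ k, DecidableEq (m k)] {α : Type*}
  [CommRing α]

theorem blockDiagonal'_smul_one (c : o → α) :
    blockDiagonal' (fun k => c k • (1 : Matrix (m k) (m k) α)) = diagonal fun i => c i.1 := by
  simp_rw [smul_one_eq_diagonal]
  exact blockDiagonal'_diagonal _

variable [Fintype o] [∀ k, Fintype (m k)]

theorem commute_blockDiagonal'_smul_one (c : o → α) (M : ∀ k, Matrix (m k) (m k) α) :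
    Commute (blockDiagonal' fun k => c k • (1 : Matrix (m k) (m k) α)) (blockDiagonal' M) := by
  rw [Commute, SemiconjBy, ← blockDiagonal'_mul, ← blockDiagonal'_mul]
  exact congrArg blockDiagonal' (funext fun k => ((Commute.one_left (M k)).smul_left (c k)).eq)

theorem blockDiagonal'_mem_unitaryGroup [StarRing α] {M : ∀ k, Matrix (m k) (m k) α}
    (hM : ∀ k, M k ∈ unitaryGroup (m k) α) : blockDiagonal' M ∈ unitaryGroup (Σ k, m k) α := by
  rw [mem_unitaryGroup_iff', star_eq_conjTranspose, blockDiagonal'_conjTranspose,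
    ← blockDiagonal'_mul, ← blockDiagonal'_one]
  exact congrArg blockDiagonal' (funext fun k => (hM k).1)

variable [StarRing α] [TopologicalSpace α]

def blockDiagonalUnitary : (∀ k, unitaryGroup (m k) α) →ₜ* unitaryGroup (Σ k, m k) α where
  toFun V := ⟨blockDiagonal' fun k => (V k : Matrix (m k) (m k) α),
    blockDiagonal'_mem_unitaryGroup fun k => (V k).2⟩
  map_one' := Subtype.ext blockDiagonal'_one
  map_mul' U V := Subtype.ext <|
    blockDiagonal'_mul (fun k => (U k : Matrix (m k) (m k) α)) fun k => (V k : Matrix (m k) (m k) α)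
  continuous_toFun := (Continuous.matrix_blockDiagonal' <|
    continuous_pi fun k => continuous_subtype_val.comp (continuous_apply k)).subtype_mk _

@[simp]
theorem coe_blockDiagonalUnitary (V : ∀ k, unitaryGroup (m k) α) :
    ((blockDiagonalUnitary V : unitaryGroup (Σ k, m k) α) : Matrix (Σ k, m k) (Σ k, m k) α)
      = blockDiagonal' fun k => (V k : Matrix (m k) (m k) α) :=
  rfl

theorem exists_blockDiagonalUnitary_eq_diagonal {d : (Σ k, m k) → α}
    (hd : ∀ i, star (d i) * d i = 1) :
    ∃ V : ∀ k, unitaryGroup (m k) α,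
      ((blockDiagonalUnitary V : unitaryGroup (Σ k, m k) α) : Matrix (Σ k, m k) (Σ k, m k) α)
        = diagonal d :=
  ⟨fun k => ⟨diagonal fun a => d ⟨k, a⟩, diagonal_mem_unitaryGroup fun a => hd ⟨k, a⟩⟩,
    (coe_blockDiagonalUnitary _).trans (blockDiagonal'_diagonal _)⟩

end BlockDiagonal

section Calculus

variable {𝕜 𝔸 : Type*} [NontriviallyNormedField 𝕜] [NormedRing 𝔸] [NormedAlgebra 𝕜 𝔸]
  {l m n : Type*} [Fintype n] {t : 𝕜}

theorem hasDerivAt_iff_forall_apply {f : 𝕜 → Matrix m n 𝔸} {f' : Matrix m n 𝔸} :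
    HasDerivAt f f' t ↔ ∀ i j, HasDerivAt (fun s => f s i j) (f' i j) t :=
  hasDerivAt_pi.trans (forall_congr' fun _ => hasDerivAt_pi)

variable [Fintype m]

theorem _root_.HasDerivAt.matrix_mul {f : 𝕜 → Matrix l m 𝔸} {g : 𝕜 → Matrix m n 𝔸}
    {f' : Matrix l m 𝔸} {g' : Matrix m n 𝔸} (hf : HasDerivAt f f' t) (hg : HasDerivAt g g' t) :
    HasDerivAt (fun s => f s * g s) (f' * g t + f t * g') t := by
  rw [hasDerivAt_iff_forall_apply] at hf hg ⊢
  intro i j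
  simpa only [mul_apply, add_apply, Finset.sum_add_distrib] using
    HasDerivAt.fun_sum fun k _ => (hf i k).fun_mul (hg k j)

theorem _root_.HasDerivAt.commute_of_forall_commute [DecidableEq n] {h : 𝕜 → Matrix n n 𝔸}
    {h' X : Matrix n n 𝔸} (hh : HasDerivAt h h' t) (hX : ∀ s, Commute X (h s)) :
    Commute X h' := by
  have hl := (hasDerivAt_const t X).matrix_mul hh
  have hr := hh.matrix_mul (hasDerivAt_const t X)
  simp only [zero_mul, zero_add, mul_zero, add_zero] at hl hr
  rw [funext fun s => (hX s).eq] at hl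
  exact hl.unique hr

end Calculus

section UnitaryCalculus

variable {𝕜 ι : Type*} [RCLike 𝕜] [Fintype ι] [DecidableEq ι] {u : ℝ → Matrix ι ι 𝕜}
  {u' : Matrix ι ι 𝕜} {t : ℝ}

theorem star_deriv_mul_eq_neg_of_unitary (hu_unitary : ∀ s, u s ∈ unitaryGroup ι 𝕜)
    (hu : HasDerivAt u u' t) : star u' * u t = -(star (u t) * u') := by
  have hderiv := hu.star.matrix_mul hu
  rw [funext fun s => (hu_unitary s).1] at hderiv
  exact eq_neg_of_add_eq_zero_left (hderiv.unique (hasDerivAt_const t 1))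

theorem star_mul_deriv_conj_mul_of_unitary {h : ℝ → Matrix ι ι 𝕜} {h' H' : Matrix ι ι 𝕜}
    (hu_unitary : ∀ s, u s ∈ unitaryGroup ι 𝕜) (hu : HasDerivAt u u' t) (hh : HasDerivAt h h' t)
    (hH : HasDerivAt (fun s => u s * h s * star (u s)) H' t) :
    star (u t) * H' * u t = h' + (star (u t) * u' * h t - h t * (star (u t) * u')) := by
  have hv : star (u t) * u t = 1 := (hu_unitary t).1
  have cancel (X : Matrix ι ι 𝕜) : star (u t) * (u t * X) = X := by rw [← mul_assoc, hv, one_mul]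
  rw [hH.unique ((hu.matrix_mul hh).matrix_mul hu.star)]
  simp only [add_mul, mul_add, mul_assoc, cancel, hv, mul_one,
    star_deriv_mul_eq_neg_of_unitary hu_unitary hu, mul_neg]
  abel

end UnitaryCalculus

section Twirl

variable {𝕜 ι : Type*} [RCLike 𝕜] [Fintype ι] [DecidableEq ι]

theorem integral_linearMap_apply {X : Type*} [MeasurableSpace X] {μ : Measure X}
    {f : X → Matrix ι ι 𝕜} (hf : ∀ i j, Integrable (fun x => f x i j) μ)
    (φ : Matrix ι ι 𝕜 →ₗ[𝕜] 𝕜) :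
    ∫ x, φ (f x) ∂μ = φ (of fun i j => ∫ x, f x i j ∂μ) := by
  have hφ (M : Matrix ι ι 𝕜) : φ M = ∑ i, ∑ j, M i j * φ (single i j 1) := by
    conv_lhs => rw [matrix_eq_sum_single M]
    simp only [map_sum]
    refine Finset.sum_congr rfl fun i _ => Finset.sum_congr rfl fun j _ => ?_
    rw [← smul_eq_mul, ← map_smul, smul_single, smul_eq_mul, mul_one]
  have hφf (x : X) := hφ (f x)
  rw [hφ]
  simp only [hφf, of_apply]
  rw [integral_finsetSum _ fun i _ => integrable_finsetSum _ fun j _ => (hf i j).mul_const _]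
  refine Finset.sum_congr rfl fun i _ => ?_
  rw [integral_finsetSum _ fun j _ => (hf i j).mul_const _]
  exact Finset.sum_congr rfl fun j _ => integral_mul_const _ _

variable {G : Type*} [Group G] [TopologicalSpace G] [MeasurableSpace G] (μ : Measure G)

-- Defined entrywise: a Bochner integral valued in `Matrix` would need the topology of the
-- local norm instance to agree with `Matrix`'s own topology up to instance reducibility.
noncomputable def twirl (π : G →ₜ* unitaryGroup ι 𝕜) (B : Matrix ι ι 𝕜) : Matrix ι ι 𝕜 :=
  of fun i j => ∫ g, ((π g : Matrix ι ι 𝕜) * B * star (π g : Matrix ι ι 𝕜)) i j ∂μ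

variable [CompactSpace G] [OpensMeasurableSpace G] [IsFiniteMeasure μ]

theorem integrable_conj_apply (π : G →ₜ* unitaryGroup ι 𝕜) (B : Matrix ι ι 𝕜) (i j : ι) :
    Integrable (fun g => ((π g : Matrix ι ι 𝕜) * B * star (π g : Matrix ι ι 𝕜)) i j) μ :=
  have hπ : Continuous fun g => (π g : Matrix ι ι 𝕜) := continuous_subtype_val.comp π.continuous
  (((hπ.matrix_mul continuous_const).matrix_mul hπ.star).matrix_elem i j
    ).integrable_of_hasCompactSupport (HasCompactSupport.of_compactSpace _)

theorem commute_twirl [MeasurableMul G] [μ.IsMulLeftInvariant] (π : G →ₜ* unitaryGroup ι 𝕜)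
    (B : Matrix ι ι 𝕜) (g : G) : Commute (π g : Matrix ι ι 𝕜) (twirl μ π B) := by
  have hconj : (π g : Matrix ι ι 𝕜) * twirl μ π B * star (π g : Matrix ι ι 𝕜) = twirl μ π B := by
    ext i j
    have hint := integral_linearMap_apply (integrable_conj_apply μ π B) <|
      entryLinearMap 𝕜 𝕜 i j ∘ₗ
        LinearMap.mulLeftRight 𝕜 ((π g : Matrix ι ι 𝕜), star (π g : Matrix ι ι 𝕜))
    simp only [LinearMap.comp_apply, LinearMap.mulLeftRight_apply, entryLinearMap_apply] at hint
    rw [twirl, ← hint]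
    simpa only [map_mul, Submonoid.coe_mul, star_mul, mul_assoc, of_apply] using
      integral_mul_left_eq_self (μ := μ)
        (fun x => ((π x : Matrix ι ι 𝕜) * B * star (π x : Matrix ι ι 𝕜)) i j) g
  calc (π g : Matrix ι ι 𝕜) * twirl μ π B
      = (π g : Matrix ι ι 𝕜) * twirl μ π B * (star (π g : Matrix ι ι 𝕜) * π g) := by
        rw [(π g).2.1, mul_one]
    _ = twirl μ π B * π g := by rw [← mul_assoc, hconj]

theorem integral_trace_conj_mul (π : G →ₜ* unitaryGroup ι 𝕜) (B C : Matrix ι ι 𝕜) :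
    ∫ g, trace ((π g : Matrix ι ι 𝕜) * B * star (π g : Matrix ι ι 𝕜) * C) ∂μ
      = trace (twirl μ π B * C) :=
  integral_linearMap_apply (integrable_conj_apply μ π B)
    (traceLinearMap ι 𝕜 𝕜 ∘ₗ LinearMap.mulRight 𝕜 C)

theorem trace_twirl_mul_of_forall_commute [IsProbabilityMeasure μ] (π : G →ₜ* unitaryGroup ι 𝕜)
    (B : Matrix ι ι 𝕜) {C : Matrix ι ι 𝕜} (hC : ∀ g, Commute (π g : Matrix ι ι 𝕜) C) :
    trace (twirl μ π B * C) = trace (B * C) := by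
  have hconj (g : G) :
      trace ((π g : Matrix ι ι 𝕜) * B * star (π g : Matrix ι ι 𝕜) * C) = trace (B * C) := by
    simp only [mul_assoc]
    rw [trace_mul_comm]
    simp only [mul_assoc]
    rw [← (hC g).eq, ← mul_assoc (star _), (π g).2.1, one_mul]
  rw [← integral_trace_conj_mul, funext hconj, integral_const, probReal_univ, one_smul]

end Twirl

section BlockTwirl

variable {o : Type*} [Fintype o] [DecidableEq o] {m : o → Type*} [∀ k, Fintype (m k)]
  [∀ k, DecidableEq (m k)] {𝕜 : Type*} [RCLike 𝕜]
  [∀ k, MeasurableSpace (unitaryGroup (m k) 𝕜)] [∀ k, BorelSpace (unitaryGroup (m k) 𝕜)]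

theorem isDiag_twirl_blockDiagonalUnitary (μ : Measure (∀ k, unitaryGroup (m k) 𝕜))
    [μ.IsMulLeftInvariant] [IsFiniteMeasure μ] (B : Matrix (Σ k, m k) (Σ k, m k) 𝕜) :
    (twirl μ blockDiagonalUnitary B).IsDiag :=
  isDiag_of_forall_commute_diagonal_sign fun i₀ => by
    obtain ⟨V, hV⟩ := exists_blockDiagonalUnitary_eq_diagonal
      (d := fun i => if i = i₀ then (-1 : 𝕜) else 1) fun i => by split_ifs <;> simp
    exact hV ▸ commute_twirl μ blockDiagonalUnitary B V

end BlockTwirl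

end Matrix

theorem haar_average_power_eq_invariant_work_integrand_general (p : ℕ)
    (n : Fin p → ℕ)
    (u : ℝ → Matrix (Σ k, Fin (n k)) (Σ k, Fin (n k)) ℂ)
    (hu_unitary : ∀ t : ℝ, u t ∈ Matrix.unitaryGroup (Σ k, Fin (n k)) ℂ)
    (t₀ : ℝ) (u' : Matrix (Σ k, Fin (n k)) (Σ k, Fin (n k)) ℂ) (hu : HasDerivAt u u' t₀)
    (lam : ℝ → Fin p → ℝ)
    (h' : Matrix (Σ k, Fin (n k)) (Σ k, Fin (n k)) ℂ)
    (hh : HasDerivAt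
      (fun t : ℝ => Matrix.blockDiagonal'
        (fun k => (lam t k : ℂ) • (1 : Matrix (Fin (n k)) (Fin (n k)) ℂ))) h' t₀)
    (H' : Matrix (Σ k, Fin (n k)) (Σ k, Fin (n k)) ℂ)
    (hH : HasDerivAt
      (fun t : ℝ => u t * Matrix.blockDiagonal'
        (fun k => (lam t k : ℂ) • (1 : Matrix (Fin (n k)) (Fin (n k)) ℂ)) * star (u t)) H' t₀)
    (ρ : Matrix (Σ k, Fin (n k)) (Σ k, Fin (n k)) ℂ)
    (μ : Measure (∀ k, Matrix.unitaryGroup (Fin (n k)) ℂ))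
    [μ.IsHaarMeasure] [IsProbabilityMeasure μ] :
    (∫ V : ∀ k, Matrix.unitaryGroup (Fin (n k)) ℂ,
        Matrix.trace
          ((u t₀ * Matrix.blockDiagonal'
              (fun k => (V k : Matrix (Fin (n k)) (Fin (n k)) ℂ)) * star (u t₀)) * ρ *
            star (u t₀ * Matrix.blockDiagonal'
              (fun k => (V k : Matrix (Fin (n k)) (Fin (n k)) ℂ)) * star (u t₀)) * H') ∂μ)
      = Matrix.trace (ρ * (u t₀ * h' * star (u t₀))) := by
  have hK := star_mul_deriv_conj_mul_of_unitary hu_unitary hu hh hH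
  set v := u t₀
  set h₀ := blockDiagonal' fun k => (lam t₀ k : ℂ) • (1 : Matrix (Fin (n k)) (Fin (n k)) ℂ)
  set B := star v * ρ * v
  have hXh' (V : ∀ k, unitaryGroup (Fin (n k)) ℂ) :
      Commute (blockDiagonalUnitary V : Matrix (Σ k, Fin (n k)) (Σ k, Fin (n k)) ℂ) h' :=
    hh.commute_of_forall_commute fun _ => (commute_blockDiagonal'_smul_one _ _).symm
  have hTh₀ : Commute (twirl μ blockDiagonalUnitary B) h₀ := by
    rw [← (isDiag_twirl_blockDiagonalUnitary μ B).diagonal_diag,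
      show h₀ = _ from blockDiagonal'_smul_one _]
    exact commute_diagonal _ _
  calc _ = ∫ V, trace ((blockDiagonalUnitary V : Matrix (Σ k, Fin (n k)) (Σ k, Fin (n k)) ℂ) *
          B * star (blockDiagonalUnitary V : Matrix (Σ k, Fin (n k)) (Σ k, Fin (n k)) ℂ) *
          (star v * H' * v)) ∂μ :=
        integral_congr_ae (ae_of_all _ fun V => trace_conj_mul_star_conj_mul _ _ _ _)
    _ = trace (twirl μ blockDiagonalUnitary B * (star v * H' * v)) := integral_trace_conj_mul ..
    _ = trace (B * h') := by
        rw [hK, mul_add, trace_add, trace_twirl_mul_of_forall_commute μ _ B hXh',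
          trace_mul_commutator_eq_zero_of_commute hTh₀, add_zero]
    _ = trace (ρ * (v * h' * star v)) := by
        simp only [B, mul_assoc]
        rw [trace_mul_comm]
        simp only [mul_assoc]

/-- **integrand of Theorem 1.** Let `H(t) = u(t) h(t) u(t)†` with
`h(t) = ⊕ₖ λₖ(t) 1_{n k}`, where `u` is a differentiable family of unitaries and `λ` is
differentiable at `t₀`.  Then the Haar average over the thermodynamic gauge group
`𝒢_T = ∏ₖ U(n k)` of the instantaneous power `Tr{W ρ W† H'(t₀)}` (with `W = u(t₀) V u(t₀)†`)
equals `Tr{ρ u(t₀) h'(t₀) u(t₀)†}`. -/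
theorem haar_average_power_eq_invariant_work_integrand (p : ℕ) (hp : 1 ≤ p)
    (n : Fin p → ℕ) (hn : ∀ k, 1 ≤ n k)
    (u : ℝ → Matrix (Σ k, Fin (n k)) (Σ k, Fin (n k)) ℂ)
    (hu_unitary : ∀ t : ℝ, u t ∈ Matrix.unitaryGroup (Σ k, Fin (n k)) ℂ)
    (t₀ : ℝ) (u' : Matrix (Σ k, Fin (n k)) (Σ k, Fin (n k)) ℂ) (hu : HasDerivAt u u' t₀)
    (lam : ℝ → Fin p → ℝ) (lam' : Fin p → ℝ) (hlam : HasDerivAt lam lam' t₀)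
    (h' : Matrix (Σ k, Fin (n k)) (Σ k, Fin (n k)) ℂ)
    (hh : HasDerivAt
      (fun t : ℝ => Matrix.blockDiagonal'
        (fun k => (lam t k : ℂ) • (1 : Matrix (Fin (n k)) (Fin (n k)) ℂ))) h' t₀)
    (H' : Matrix (Σ k, Fin (n k)) (Σ k, Fin (n k)) ℂ)
    (hH : HasDerivAt
      (fun t : ℝ => u t * Matrix.blockDiagonal'
        (fun k => (lam t k : ℂ) • (1 : Matrix (Fin (n k)) (Fin (n k)) ℂ)) * star (u t)) H' t₀)
    (ρ : Matrix (Σ k, Fin (n k)) (Σ k, Fin (n k)) ℂ) (hρ : ρ.PosSemidef) (hρ_tr : ρ.trace = 1)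
    (μ : Measure (∀ k, Matrix.unitaryGroup (Fin (n k)) ℂ))
    [μ.IsHaarMeasure] [IsProbabilityMeasure μ] :
    (∫ V : ∀ k, Matrix.unitaryGroup (Fin (n k)) ℂ,
        Matrix.trace
          ((u t₀ * Matrix.blockDiagonal'
              (fun k => (V k : Matrix (Fin (n k)) (Fin (n k)) ℂ)) * star (u t₀)) * ρ *
            star (u t₀ * Matrix.blockDiagonal'
              (fun k => (V k : Matrix (Fin (n k)) (Fin (n k)) ℂ)) * star (u t₀)) * H') ∂μ)
      = Matrix.trace (ρ * (u t₀ * h' * star (u t₀))) :=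
  haar_average_power_eq_invariant_work_integrand_general p n u hu_unitary t₀ u' hu lam h' hh H' hH ρ
    μ
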